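/- arXiv:math/0609488 — 5 statements merged into one kernel-verified Lean document; each statement's English description precedes it below -/
import Mathlib

section
/- For α in (0,1) and p in (0,1) with p̄ = 1 - p, the function q(x) = p·p̄·sin(απ)·x^{α-1}·(1-x)^{α-1} / (π·[p̄²·x^{2α} + p²·(1-x)^{2α} + 2·p·p̄·x^α·(1-x)^α·cos(απ)]) on (0,1) is a probability density, i.e., it is nonnegative on (0,1) and integrates to 1 over (0,1). -/
/-!
Writing `u = x ^ α` and `v = (1 - x) ^ α`, the denominator of `q` is `π |p v + (1 - p) u e^{iαπ}|²`,
and `q` is `1 / (απ)` times the derivative of the argument of `p v + (1 - p) u e^{iαπ}`. As `x`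
runs over `(0, 1)` this argument increases from `0` to `απ`, so the integral of `q` is `1`.
-/

open Real MeasureTheory

open Filter Set Topology

theorem intervalIntegrable_deriv_of_nonneg_of_tendsto {f f' : ℝ → ℝ} {a b fa fb : ℝ}
    (hab : a < b) (hderiv : ∀ x ∈ Ioo a b, HasDerivAt f (f' x) x)
    (hpos : ∀ x ∈ Ioo a b, 0 ≤ f' x) (ha : Tendsto f (𝓝[>] a) (𝓝 fa))
    (hb : Tendsto f (𝓝[<] b) (𝓝 fb)) : IntervalIntegrable f' volume a b := by
  classical
  let F := Function.update (Function.update f a fa) b fb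
  have hF : ∀ x ∈ Ioo a b, F =ᶠ[𝓝 x] f := fun x hx => by
    filter_upwards [Ioo_mem_nhds hx.1 hx.2] with y hy
    simp only [F, Function.update_of_ne hy.2.ne, Function.update_of_ne hy.1.ne']
  have hcont : ContinuousOn F (Icc a b) := by
    rw [continuousOn_update_iff, continuousOn_update_iff, Icc_sdiff_right, Ico_sdiff_left]
    refine ⟨⟨fun z hz => (hderiv z hz).continuousAt.continuousWithinAt, fun _ =>
      ha.mono_left (nhdsWithin_mono _ Ioo_subset_Ioi_self)⟩, fun _ => ?_⟩
    refine (hb.congr' ?_).mono_left (nhdsWithin_mono _ Ico_subset_Iio_self)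
    filter_upwards [Ioo_mem_nhdsLT hab] with z hz using (Function.update_of_ne hz.1.ne' _ _).symm
  refine intervalIntegral.intervalIntegrable_deriv_of_nonneg (g := F) ?_ ?_ ?_
  · rwa [uIcc_of_le hab.le]
  · rw [min_eq_left hab.le, max_eq_right hab.le]
    exact fun x hx => (hderiv x hx).congr_of_eventuallyEq (hF x hx)
  · rwa [min_eq_left hab.le, max_eq_right hab.le]

theorem HasDerivAt.arctan_div {f g : ℝ → ℝ} {f' g' x : ℝ} (hf : HasDerivAt f f' x)
    (hg : HasDerivAt g g' x) (hx : g x ≠ 0) :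
    HasDerivAt (fun y => Real.arctan (f y / g y))
      ((f' * g x - f x * g') / (f x ^ 2 + g x ^ 2)) x := by
  refine (hf.div hg hx).arctan.congr_deriv ?_
  have : f x ^ 2 + g x ^ 2 ≠ 0 := by positivity
  simp only [Pi.div_apply]
  field_simp
  ring

namespace Lamperti

noncomputable def density (α p x : ℝ) : ℝ :=
  p * (1 - p) * Real.sin (α * π) * x ^ (α - 1) * (1 - x) ^ (α - 1) /
    (π * ((1 - p) ^ 2 * x ^ (2 * α) + p ^ 2 * (1 - x) ^ (2 * α) +
      2 * p * (1 - p) * x ^ α * (1 - x) ^ α * Real.cos (α * π)))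

/-- `re α p x + i im α p x = p (1 - x) ^ α + (1 - p) x ^ α e^{iαπ}`. -/
noncomputable def re (α p x : ℝ) : ℝ := p * (1 - x) ^ α + (1 - p) * cos (α * π) * x ^ α

noncomputable def im (α p x : ℝ) : ℝ := (1 - p) * sin (α * π) * x ^ α

/-- The argument of `re α p x + i im α p x`, divided by `απ`. -/
noncomputable def cdf (α p x : ℝ) : ℝ := (π / 2 - arctan (re α p x / im α p x)) / (α * π)

variable {α p x : ℝ}

theorem sin_mul_pi_pos (hα : α ∈ Ioo 0 1) : 0 < sin (α * π) :=
  sin_pos_of_pos_of_lt_pi (by nlinarith [hα.1, pi_pos]) (by nlinarith [hα.2, pi_pos])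

theorem im_pos (hα : α ∈ Ioo 0 1) (hp : p < 1) (hx : 0 < x) : 0 < im α p x := by
  have := sin_mul_pi_pos hα
  have : 0 < 1 - p := by linarith
  unfold im
  positivity

theorem continuous_re (hα : 0 ≤ α) : Continuous (re α p) := by
  unfold re
  fun_prop (disch := exact hα)

theorem continuous_im (hα : 0 ≤ α) : Continuous (im α p) := by
  unfold im
  fun_prop (disch := exact hα)

theorem density_eq (hx : x ∈ Icc 0 1) :
    density α p x = p * (1 - p) * sin (α * π) * x ^ (α - 1) * (1 - x) ^ (α - 1) /
      (π * (re α p x ^ 2 + im α p x ^ 2)) := by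
  have hx1 : 0 ≤ 1 - x := by linarith [hx.2]
  have hsq : (2 : ℝ) * α = α * (2 : ℕ) := by push_cast; ring
  rw [density, hsq, rpow_mul_natCast hx.1, rpow_mul_natCast hx1, re, im]
  congr 2
  linear_combination -(1 - p) ^ 2 * (x ^ α) ^ 2 * sin_sq_add_cos_sq (α * π)

theorem density_pos (hα : α ∈ Ioo 0 1) (hp : p ∈ Ioo 0 1) (hx : x ∈ Ioo 0 1) :
    0 < density α p x := by
  obtain ⟨hp0, hp1⟩ := hp
  obtain ⟨hx0, hx1⟩ := hx
  have := sin_mul_pi_pos hα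
  have := im_pos hα hp1 hx0
  have : 0 < 1 - p := by linarith
  have : 0 < 1 - x := by linarith
  rw [density_eq ⟨hx0.le, hx1.le⟩]
  positivity

theorem hasDerivAt_cdf (hα : α ∈ Ioo 0 1) (hp : p < 1) (hx : x ∈ Ioo 0 1) :
    HasDerivAt (cdf α p) (density α p x) x := by
  obtain ⟨hx0, hx1⟩ := hx
  have hx1' : 0 < 1 - x := by linarith
  have hu : HasDerivAt (fun y => y ^ α) (α * x ^ (α - 1)) x :=
    hasDerivAt_rpow_const (Or.inl hx0.ne')
  have hv : HasDerivAt (fun y => (1 - y) ^ α) (α * (1 - x) ^ (α - 1) * -1) x :=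
    (hasDerivAt_rpow_const (Or.inl hx1'.ne')).comp x ((hasDerivAt_id x).const_sub 1)
  have hre : HasDerivAt (re α p) (p * (α * (1 - x) ^ (α - 1) * -1) +
      (1 - p) * cos (α * π) * (α * x ^ (α - 1))) x :=
    (hv.const_mul p).add (hu.const_mul ((1 - p) * cos (α * π)))
  have him : HasDerivAt (im α p) ((1 - p) * sin (α * π) * (α * x ^ (α - 1))) x :=
    hu.const_mul ((1 - p) * sin (α * π))
  have him_pos := im_pos hα hp hx0
  refine (((hre.arctan_div him him_pos.ne').const_sub (π / 2)).div_const
    (α * π)).congr_deriv ?_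
  have hxa : x ^ α = x * x ^ (α - 1) := by
    rw [← rpow_one_add' hx0.le (by linarith [hα.1]), add_sub_cancel]
  have hxa' : (1 - x) ^ α = (1 - x) * (1 - x) ^ (α - 1) := by
    rw [← rpow_one_add' hx1'.le (by linarith [hα.1]), add_sub_cancel]
  have hD : re α p x ^ 2 + im α p x ^ 2 ≠ 0 := by positivity
  rw [density_eq ⟨hx0.le, hx1.le⟩]
  simp only [re, im] at hD ⊢
  rw [hxa, hxa'] at hD ⊢
  have := hα.1.ne'
  have := pi_pos.ne'
  field_simp
  ring

theorem tendsto_cdf_zero (hα : α ∈ Ioo 0 1) (hp : p ∈ Ioo 0 1) :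
    Tendsto (cdf α p) (𝓝[>] 0) (𝓝 0) := by
  have hre : Tendsto (re α p) (𝓝[>] 0) (𝓝 p) := by
    simpa [re, zero_rpow hα.1.ne'] using
      ((continuous_re hα.1.le).tendsto 0).mono_left nhdsWithin_le_nhds
  have him : Tendsto (im α p) (𝓝[>] 0) (𝓝[>] 0) := by
    refine tendsto_nhdsWithin_iff.mpr ⟨?_, eventually_nhdsWithin_of_forall fun x hx =>
      im_pos hα hp.2 hx⟩
    simpa [im, zero_rpow hα.1.ne'] using
      ((continuous_im hα.1.le).tendsto 0).mono_left nhdsWithin_le_nhds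
  have hratio : Tendsto (fun x => re α p x / im α p x) (𝓝[>] 0) atTop := by
    simpa only [div_eq_mul_inv, Pi.inv_apply] using
      hre.pos_mul_atTop hp.1 him.inv_tendsto_nhdsGT_zero
  have h := (((tendsto_arctan_atTop.mono_right nhdsWithin_le_nhds).comp hratio).const_sub
    (π / 2)).div_const (α * π)
  rwa [sub_self, zero_div] at h

theorem cdf_one (hα : α ∈ Ioo 0 1) (hp : p < 1) : cdf α p 1 = 1 := by
  have hcot : arctan (cos (α * π) / sin (α * π)) = π / 2 - α * π := by
    have : cos (α * π) / sin (α * π) = tan (π / 2 - α * π) := by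
      rw [tan_eq_sin_div_cos, sin_pi_div_two_sub, cos_pi_div_two_sub]
    rw [this, arctan_tan] <;> nlinarith [hα.1, hα.2, pi_pos]
  have hp1 : 1 - p ≠ 0 := by linarith
  have := hα.1.ne'
  rw [cdf, re, im, sub_self, zero_rpow hα.1.ne', one_rpow, mul_zero, zero_add, mul_one, mul_one,
    mul_div_mul_left _ _ hp1, hcot]
  field_simp
  ring

theorem tendsto_cdf_one (hα : α ∈ Ioo 0 1) (hp : p < 1) :
    Tendsto (cdf α p) (𝓝[<] 1) (𝓝 1) := by
  have hcont : ContinuousAt (cdf α p) 1 :=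
    (continuousAt_const.sub (continuous_arctan.continuousAt.comp
      ((continuous_re hα.1.le).continuousAt.div (continuous_im hα.1.le).continuousAt
        (im_pos hα hp one_pos).ne'))).div_const _
  simpa [cdf_one hα hp] using hcont.tendsto.mono_left nhdsWithin_le_nhds

end Lamperti

open Lamperti in
theorem stmt_0 (α p : ℝ) (hα : α ∈ Set.Ioo (0:ℝ) 1) (hp : p ∈ Set.Ioo (0:ℝ) 1) :
    (∀ x ∈ Set.Ioo (0:ℝ) 1, 0 ≤
      p * (1 - p) * Real.sin (α * π) * x ^ (α - 1) * (1 - x) ^ (α - 1) /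
        (π * ((1 - p) ^ 2 * x ^ (2 * α) + p ^ 2 * (1 - x) ^ (2 * α) +
          2 * p * (1 - p) * x ^ α * (1 - x) ^ α * Real.cos (α * π)))) ∧
    ∫ x in (0:ℝ)..1,
      p * (1 - p) * Real.sin (α * π) * x ^ (α - 1) * (1 - x) ^ (α - 1) /
        (π * ((1 - p) ^ 2 * x ^ (2 * α) + p ^ 2 * (1 - x) ^ (2 * α) +
          2 * p * (1 - p) * x ^ α * (1 - x) ^ α * Real.cos (α * π))) = 1 := by
  have hnonneg : ∀ x ∈ Ioo (0:ℝ) 1, 0 ≤ density α p x := fun x hx => (density_pos hα hp hx).le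
  have hderiv : ∀ x ∈ Ioo (0:ℝ) 1, HasDerivAt (cdf α p) (density α p x) x :=
    fun x hx => hasDerivAt_cdf hα hp.2 hx
  have h0 := tendsto_cdf_zero hα hp
  have h1 := tendsto_cdf_one hα hp.2
  refine ⟨hnonneg, ?_⟩
  have h := intervalIntegral.integral_eq_sub_of_hasDerivAt_of_tendsto zero_lt_one hderiv
    (intervalIntegrable_deriv_of_nonneg_of_tendsto zero_lt_one hderiv hnonneg h0 h1) h0 h1
  rwa [sub_zero] at h
end

section
/- For α in (0,1) and p, p̄ = 1-p in (0,1), the cumulative distribution function on (0,1) given by F(x) = (1/(απ))·arctan( sin(πα)·x^α·p̄ / (cos(απ)·x^α·p̄ + (1-x)^α·p) ) satisfies F'(x) = p·p̄·sin(απ)·x^{α-1}·(1-x)^{α-1} / (π·[p̄²·x^{2α} + p²·(1-x)^{2α} + 2·p·p̄·x^α·(1-x)^α·cos(απ)]) for x ∈ (0,1), provided cos(απ)·x^α·p̄ + (1-x)^α·p ≠ 0. -/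
open Real

theorem hasDerivAt_arctan_div {f g : ℝ → ℝ} {f' g' x : ℝ} (hf : HasDerivAt f f' x)
    (hg : HasDerivAt g g' x) (hgx : g x ≠ 0) :
    HasDerivAt (fun y => arctan (f y / g y))
      ((f' * g x - f x * g') / (f x ^ 2 + g x ^ 2)) x := by
  refine (hf.div hg hgx).arctan.congr_deriv ?_
  rw [Pi.div_apply]
  field_simp
  ring

/-- The `b`-terms of `u' v - u v'` cancel, and the remaining
`α a c (x ^ (α - 1) (1 - x) ^ α + x ^ α (1 - x) ^ (α - 1))` equals
`α a c x ^ (α - 1) (1 - x) ^ (α - 1) (x + (1 - x))`. -/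
theorem hasDerivAt_arctan_rpow_ratio {α x : ℝ} (a b c : ℝ) (hx0 : x ≠ 0) (hx1 : 1 - x ≠ 0)
    (hden : b * x ^ α + c * (1 - x) ^ α ≠ 0) :
    HasDerivAt (fun y => arctan (a * y ^ α / (b * y ^ α + c * (1 - y) ^ α)))
      (α * a * c * x ^ (α - 1) * (1 - x) ^ (α - 1) /
        ((a * x ^ α) ^ 2 + (b * x ^ α + c * (1 - x) ^ α) ^ 2)) x := by
  have hA : HasDerivAt (fun y : ℝ => y ^ α) (α * x ^ (α - 1)) x :=
    hasDerivAt_rpow_const (Or.inl hx0)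
  have hB : HasDerivAt (fun y : ℝ => (1 - y) ^ α) (α * (1 - x) ^ (α - 1) * -1) x :=
    (hasDerivAt_rpow_const (Or.inl hx1)).comp x ((hasDerivAt_id x).const_sub 1)
  refine (hasDerivAt_arctan_div (hA.const_mul a) ((hA.const_mul b).add (hB.const_mul c))
    hden).congr_deriv ?_
  rw [Pi.add_apply, rpow_sub_one hx0, rpow_sub_one hx1]
  field_simp
  ring

theorem stmt_1_general (α p : ℝ) (hα : α ∈ Set.Ioo (0:ℝ) 1)
    (x : ℝ) (hx : x ∈ Set.Ioo (0:ℝ) 1)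
    (hden : Real.cos (α * π) * x ^ α * (1 - p) + (1 - x) ^ α * p ≠ 0) :
    HasDerivAt
      (fun y : ℝ => (1 / (α * π)) *
        Real.arctan (Real.sin (π * α) * y ^ α * (1 - p) /
          (Real.cos (α * π) * y ^ α * (1 - p) + (1 - y) ^ α * p)))
      (p * (1 - p) * Real.sin (α * π) * x ^ (α - 1) * (1 - x) ^ (α - 1) /
        (π * ((1 - p) ^ 2 * x ^ (2 * α) + p ^ 2 * (1 - x) ^ (2 * α) +
          2 * p * (1 - p) * x ^ α * (1 - x) ^ α * Real.cos (α * π)))) x := by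
  obtain ⟨hx0, hx1⟩ := hx
  rw [mul_comm π α]
  set s := sin (α * π)
  set c := cos (α * π)
  have hratio := hasDerivAt_arctan_rpow_ratio (α := α) (s * (1 - p)) (c * (1 - p)) p hx0.ne'
    (sub_pos.2 hx1).ne'    (by rwa [mul_right_comm, mul_comm p])
  have hsq (z : ℝ) (hz : 0 ≤ z) : z ^ (2 * α) = (z ^ α) ^ 2 := by
    rw [mul_comm, ← rpow_mul_natCast hz]; norm_num
  have hdenom : (s * (1 - p) * x ^ α) ^ 2 + (c * (1 - p) * x ^ α + p * (1 - x) ^ α) ^ 2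
      = (1 - p) ^ 2 * x ^ (2 * α) + p ^ 2 * (1 - x) ^ (2 * α) +
          2 * p * (1 - p) * x ^ α * (1 - x) ^ α * c := by
    rw [hsq x hx0.le, hsq (1 - x) (sub_pos.2 hx1).le]
    linear_combination ((1 - p) * x ^ α) ^ 2 * sin_sq_add_cos_sq (α * π)
  have hα0 : α ≠ 0 := hα.1.ne'
  refine ((hratio.const_mul (1 / (α * π))).congr_deriv ?_).congr_of_eventuallyEq
    (.of_forall fun y => ?_)
  · rw [hdenom]
    field_simp
  · ring_nf

theorem stmt_1 (α p : ℝ) (hα : α ∈ Set.Ioo (0:ℝ) 1) (hp : p ∈ Set.Ioo (0:ℝ) 1)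
    (x : ℝ) (hx : x ∈ Set.Ioo (0:ℝ) 1)
    (hden : Real.cos (α * π) * x ^ α * (1 - p) + (1 - x) ^ α * p ≠ 0) :
    HasDerivAt
      (fun y : ℝ => (1 / (α * π)) *
        Real.arctan (Real.sin (π * α) * y ^ α * (1 - p) /
          (Real.cos (α * π) * y ^ α * (1 - p) + (1 - y) ^ α * p)))
      (p * (1 - p) * Real.sin (α * π) * x ^ (α - 1) * (1 - x) ^ (α - 1) /
        (π * ((1 - p) ^ 2 * x ^ (2 * α) + p ^ 2 * (1 - x) ^ (2 * α) +
          2 * p * (1 - p) * x ^ α * (1 - x) ^ α * Real.cos (α * π)))) x :=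
  stmt_1_general α p hα x hx hden
end

section
/- The function q(y) = (9/(2π))·y^{3/2}·(1-y)^{3/2}/(y³+(1-y)³)² on (0,1) is a probability density: it is nonnegative and ∫_0^1 q(y) dy = 1. -/
/-!
Writing `t = y (1 - y)`, the denominator is `y³ + (1 - y)³ = 1 - 3t`, and the integrand has an
explicit primitive `F = densityPrimitive`. Its arcsine terms keep `F` continuous on all of `ℝ`
(the equivalent arctangent form, with `arctan ((2y - 1) / √t)`, jumps at the endpoints), so the
fundamental theorem of calculus on `[0, 1]` gives the integral `F 1 - F 0 = 2π / 9`.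
-/

open Real Set

lemma three_mul_sq_sub_three_mul_add_one_pos (y : ℝ) : 0 < 3 * y ^ 2 - 3 * y + 1 := by
  nlinarith [sq_nonneg (2 * y - 1)]

lemma hasDerivAt_two_mul_sub_one (y : ℝ) : HasDerivAt (fun y : ℝ => 2 * y - 1) 2 y := by
  simpa using ((hasDerivAt_id y).const_mul (2:ℝ)).sub_const 1

lemma hasDerivAt_three_mul_sq_sub_three_mul_add_one (y : ℝ) :
    HasDerivAt (fun y : ℝ => 3 * y ^ 2 - 3 * y + 1) (6 * y - 3) y := by
  refine ((((hasDerivAt_pow 2 y).const_mul (3:ℝ)).sub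
    ((hasDerivAt_id y).const_mul 3)).add_const 1).congr_deriv ?_
  norm_num
  ring

lemma hasDerivAt_arcsin_two_mul_sub_one {y : ℝ} (hy : y ∈ Ioo (0:ℝ) 1) :
    HasDerivAt (fun y => arcsin (2 * y - 1)) (1 / √(y * (1 - y))) y := by
  have hsqrt : √(1 - (2 * y - 1) ^ 2) = 2 * √(y * (1 - y)) := by
    rw [show 1 - (2 * y - 1) ^ 2 = 2 ^ 2 * (y * (1 - y)) by ring, sqrt_mul (by norm_num),
      sqrt_sq (by norm_num)]
  have hs : 0 < √(y * (1 - y)) := sqrt_pos.2 (mul_pos hy.1 (by linarith [hy.2]))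
  refine ((hasDerivAt_arcsin (by linarith [hy.1]) (by linarith [hy.2])).comp y
    (hasDerivAt_two_mul_sub_one y)).congr_deriv ?_
  rw [hsqrt]
  field_simp

lemma hasDerivAt_arcsin_two_mul_sub_one_div_sqrt {y : ℝ} (hy : y ∈ Ioo (0:ℝ) 1) :
    HasDerivAt (fun y => arcsin ((2 * y - 1) / √(3 * y ^ 2 - 3 * y + 1)))
      (1 / (2 * (3 * y ^ 2 - 3 * y + 1) * √(y * (1 - y)))) y := by
  have ht : 0 < y * (1 - y) := mul_pos hy.1 (by linarith [hy.2])
  have hq := three_mul_sq_sub_three_mul_add_one_pos y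
  have hg := (hasDerivAt_two_mul_sub_one y).fun_div
    ((hasDerivAt_three_mul_sq_sub_three_mul_add_one y).sqrt hq.ne') (sqrt_pos.2 hq).ne'
  set q := 3 * y ^ 2 - 3 * y + 1
  have hsq : ((2 * y - 1) / √q) ^ 2 = (2 * y - 1) ^ 2 / q := by rw [div_pow, sq_sqrt hq.le]
  have hsqrt : √(1 - ((2 * y - 1) / √q) ^ 2) = √(y * (1 - y)) / √q := by
    rw [← sqrt_div' _ hq.le, hsq]
    congr 1
    field_simp
    ring
  have hlt : ((2 * y - 1) / √q) ^ 2 < 1 := by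
    rw [hsq, div_lt_one hq]
    nlinarith
  have hne : (2 * y - 1) / √q ≠ -1 ∧ (2 * y - 1) / √q ≠ 1 := by
    constructor <;> intro h <;> rw [h] at hlt <;> norm_num at hlt
  refine ((hasDerivAt_arcsin hne.1 hne.2).comp y hg).congr_deriv ?_
  have := sqrt_pos.2 ht
  have := sqrt_pos.2 hq
  rw [hsqrt]
  field_simp
  rw [sq_sqrt hq.le]
  ring

lemma hasDerivAt_two_mul_sub_one_mul_sqrt_div {y : ℝ} (hy : y ∈ Ioo (0:ℝ) 1) :
    HasDerivAt (fun y => (2 * y - 1) * √(y * (1 - y)) / (3 * (3 * y ^ 2 - 3 * y + 1)))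
      (-(1 - 5 * (y * (1 - y))) / (6 * √(y * (1 - y)) * (3 * y ^ 2 - 3 * y + 1) ^ 2)) y := by
  have ht : 0 < y * (1 - y) := mul_pos hy.1 (by linarith [hy.2])
  have hq := three_mul_sq_sub_three_mul_add_one_pos y
  have ht' : HasDerivAt (fun y : ℝ => y * (1 - y)) (1 - 2 * y) y :=
    ((hasDerivAt_id y).fun_mul ((hasDerivAt_const y 1).fun_sub (hasDerivAt_id y))).congr_deriv
      (by simp only [id]; ring)
  refine (((hasDerivAt_two_mul_sub_one y).fun_mul (ht'.sqrt ht.ne')).fun_div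
    ((hasDerivAt_three_mul_sq_sub_three_mul_add_one y).const_mul 3)
    (by positivity)).congr_deriv ?_
  have hs2 := sq_sqrt ht.le
  have hs := sqrt_pos.2 ht
  set s := √(y * (1 - y))
  set q := 3 * y ^ 2 - 3 * y + 1
  field_simp
  linear_combination -12 * (6 * y ^ 2 - 6 * y + 1) * hs2

noncomputable def densityPrimitive (y : ℝ) : ℝ :=
  (arcsin (2 * y - 1) + arcsin ((2 * y - 1) / √(3 * y ^ 2 - 3 * y + 1))) / 9 +
    (2 * y - 1) * √(y * (1 - y)) / (3 * (3 * y ^ 2 - 3 * y + 1))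

lemma continuous_densityPrimitive : Continuous densityPrimitive := by
  have hq := three_mul_sq_sub_three_mul_add_one_pos
  unfold densityPrimitive
  fun_prop (disch := intro y; have := hq y; first
    | exact (sqrt_pos.2 this).ne' | exact (mul_pos three_pos this).ne')

lemma densityPrimitive_zero : densityPrimitive 0 = -(π / 9) := by
  norm_num [densityPrimitive]
  ring

lemma densityPrimitive_one : densityPrimitive 1 = π / 9 := by
  norm_num [densityPrimitive]

lemma rpow_three_halves_mul_rpow_three_halves {a b : ℝ} (ha : 0 ≤ a) (hb : 0 ≤ b) :
    a ^ ((3:ℝ) / 2) * b ^ ((3:ℝ) / 2) = a * b * √(a * b) := by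
  rw [← mul_rpow ha hb, show (3:ℝ) / 2 = 1 + 1 / 2 by norm_num,
    rpow_add' (mul_nonneg ha hb) (by norm_num), rpow_one, sqrt_eq_rpow]

lemma hasDerivAt_densityPrimitive {y : ℝ} (hy : y ∈ Ioo (0:ℝ) 1) :
    HasDerivAt densityPrimitive
      (y ^ ((3:ℝ) / 2) * (1 - y) ^ ((3:ℝ) / 2) / (y ^ 3 + (1 - y) ^ 3) ^ 2) y := by
  refine ((((hasDerivAt_arcsin_two_mul_sub_one hy).add
    (hasDerivAt_arcsin_two_mul_sub_one_div_sqrt hy)).div_const 9).add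
    (hasDerivAt_two_mul_sub_one_mul_sqrt_div hy)).congr_deriv ?_
  have ht : 0 < y * (1 - y) := mul_pos hy.1 (by linarith [hy.2])
  have hs2 := sq_sqrt ht.le
  have hs := sqrt_pos.2 ht
  have hq := three_mul_sq_sub_three_mul_add_one_pos y
  rw [rpow_three_halves_mul_rpow_three_halves hy.1.le (by linarith [hy.2]),
    show y ^ 3 + (1 - y) ^ 3 = 3 * y ^ 2 - 3 * y + 1 by ring]
  set s := √(y * (1 - y))
  set q := 3 * y ^ 2 - 3 * y + 1
  field_simp
  linear_combination -108 * (y * (1 - y)) * hs2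

lemma integral_rpow_mul_rpow_div_sq :
    ∫ y in (0:ℝ)..1, y ^ ((3:ℝ) / 2) * (1 - y) ^ ((3:ℝ) / 2) / (y ^ 3 + (1 - y) ^ 3) ^ 2
      = 2 * π / 9 := by
  have hden (y : ℝ) : y ^ 3 + (1 - y) ^ 3 ≠ 0 := by
    nlinarith [three_mul_sq_sub_three_mul_add_one_pos y]
  have hcont : Continuous fun y : ℝ =>
      y ^ ((3:ℝ) / 2) * (1 - y) ^ ((3:ℝ) / 2) / (y ^ 3 + (1 - y) ^ 3) ^ 2 := by
    fun_prop (disch := first | exact fun y => pow_ne_zero 2 (hden y) | norm_num)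
  rw [intervalIntegral.integral_eq_sub_of_hasDerivAt_of_le zero_le_one
    continuous_densityPrimitive.continuousOn (fun y hy => hasDerivAt_densityPrimitive hy)
    (hcont.intervalIntegrable 0 1), densityPrimitive_one, densityPrimitive_zero]
  ring

theorem stmt_9 :
    (∀ y ∈ Set.Ioo (0:ℝ) 1, 0 ≤
      (9 / (2 * π)) * y ^ ((3:ℝ)/2) * (1 - y) ^ ((3:ℝ)/2) /
        (y ^ 3 + (1 - y) ^ 3) ^ 2) ∧
    ∫ y in (0:ℝ)..1,
      (9 / (2 * π)) * y ^ ((3:ℝ)/2) * (1 - y) ^ ((3:ℝ)/2) /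
        (y ^ 3 + (1 - y) ^ 3) ^ 2 = 1 := by
  refine ⟨fun y ⟨hy0, hy1⟩ => ?_, ?_⟩
  · have : 0 < 1 - y := sub_pos.2 hy1
    positivity
  · simp_rw [mul_assoc, mul_div_assoc]
    rw [intervalIntegral.integral_const_mul]
    simp_rw [← mul_div_assoc]
    rw [integral_rpow_mul_rpow_div_sq]
    field_simp
end

section
/- Let η be a probability measure on ℝ₊ with ∫ x^α dη(x) < ∞ for α ∈ (0,1), and suppose t > 0 is such that ∫ |t-x|^{α-1} dη(x) < ∞. Then the map y ↦ ∫_{ℝ₊} |y-x|^{α-1} dη(x) is integrable on (0,t) with respect to Lebesgue measure. -/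
open Real MeasureTheory Set intervalIntegral

/-! By Tonelli it suffices to bound `∫ ∫_{(0,t)} |y - x| ^ (α - 1) dy dη(x)`. For `x ≥ 0`, enlarging
`(0, t)` to `(0, x + t)` and splitting at `y = x` bounds the inner integral by `(x ^ α + t ^ α) / α`,
which is `η`-integrable by the moment assumption. -/

section
variable {s : ℝ}

theorem intervalIntegrable_abs_rpow {r : ℝ} (hr : -1 < r) (a b : ℝ) :
    IntervalIntegrable (fun u => |u| ^ r) volume a b := by
  have h_nonneg : ∀ c, 0 ≤ c → IntervalIntegrable (fun u => |u| ^ r) volume 0 c := fun c hc =>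
    (intervalIntegrable_rpow' hr).congr_uIoo fun u hu => by
      rw [uIoo_of_le hc] at hu
      rw [abs_of_pos hu.1]
  have h_zero : ∀ c, IntervalIntegrable (fun u => |u| ^ r) volume 0 c := by
    intro c
    rcases le_total 0 c with hc | hc
    · exact h_nonneg c hc
    · rw [IntervalIntegrable.iff_comp_neg]
      simpa only [abs_neg, neg_zero] using h_nonneg (-c) (by linarith)
  exact (h_zero a).symm.trans (h_zero b)

theorem intervalIntegrable_abs_sub_rpow {r : ℝ} (hr : -1 < r) (x a b : ℝ) :
    IntervalIntegrable (fun y => |y - x| ^ r) volume a b := by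
  simpa only [sub_add_cancel] using (intervalIntegrable_abs_rpow hr (a - x) (b - x)).comp_sub_right x

theorem integral_rpow_sub_left (hs : 0 < s) (a x : ℝ) :
    ∫ y in a..x, (x - y) ^ (s - 1) = (x - a) ^ s / s := by
  rw [integral_comp_sub_left (fun u => u ^ (s - 1)), sub_self,
    integral_rpow (Or.inl (by linarith)), sub_add_cancel, zero_rpow hs.ne', sub_zero]

theorem integral_rpow_sub_right (hs : 0 < s) (x b : ℝ) :
    ∫ y in x..b, (y - x) ^ (s - 1) = (b - x) ^ s / s := by
  rw [integral_comp_sub_right (fun u => u ^ (s - 1)), sub_self,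
    integral_rpow (Or.inl (by linarith)), sub_add_cancel, zero_rpow hs.ne', sub_zero]

theorem integral_abs_sub_rpow (hs : 0 < s) {a b x : ℝ} (hax : a ≤ x) (hxb : x ≤ b) :
    ∫ y in a..b, |y - x| ^ (s - 1) = ((x - a) ^ s + (b - x) ^ s) / s := by
  have hr : -1 < s - 1 := by linarith
  rw [← integral_add_adjacent_intervals (intervalIntegrable_abs_sub_rpow hr x a x)
      (intervalIntegrable_abs_sub_rpow hr x x b), add_div,
    ← integral_rpow_sub_left hs a x, ← integral_rpow_sub_right hs x b]
  congr 1
  · refine integral_congr fun y hy => ?_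
    rw [uIcc_of_le hax] at hy
    rw [abs_sub_comm, abs_of_nonneg (by linarith [hy.2])]
  · refine integral_congr fun y hy => ?_
    rw [uIcc_of_le hxb] at hy
    rw [abs_of_nonneg (by linarith [hy.1])]

theorem setLIntegral_Ioo_abs_sub_rpow_le (hs : 0 < s) {x t : ℝ} (hx : 0 ≤ x) (ht : 0 ≤ t) :
    ∫⁻ y in Ioo 0 t, ENNReal.ofReal (|y - x| ^ (s - 1)) ≤
      ENNReal.ofReal ((x ^ s + t ^ s) / s) := by
  have hxt : 0 ≤ x + t := by linarith
  calc ∫⁻ y in Ioo 0 t, ENNReal.ofReal (|y - x| ^ (s - 1))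
      ≤ ∫⁻ y in Ioc 0 (x + t), ENNReal.ofReal (|y - x| ^ (s - 1)) :=
        lintegral_mono_set fun y hy => ⟨hy.1, by linarith [hy.2]⟩
    _ = ENNReal.ofReal (∫ y in 0..x + t, |y - x| ^ (s - 1)) := by
        rw [integral_of_le hxt, ofReal_integral_eq_lintegral_ofReal
          ((intervalIntegrable_abs_sub_rpow (by linarith) x 0 (x + t)).1)
          (ae_of_all _ fun y => rpow_nonneg (abs_nonneg _) _)]
    _ = ENNReal.ofReal ((x ^ s + t ^ s) / s) := by
        rw [integral_abs_sub_rpow hs hx (by linarith), sub_zero, add_sub_cancel_left]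

theorem integrable_abs_sub_rpow_prod (hs : 0 < s) {t : ℝ} (ht : 0 ≤ t) {η : Measure ℝ}
    [IsFiniteMeasure η] (hη : ∀ᵐ x ∂η, 0 ≤ x) (hmom : Integrable (fun x => x ^ s) η) :
    Integrable (fun p : ℝ × ℝ => |p.1 - p.2| ^ (s - 1)) ((volume.restrict (Ioo 0 t)).prod η) := by
  have hmeas : Measurable fun p : ℝ × ℝ => |p.1 - p.2| ^ (s - 1) := by fun_prop
  refine ⟨hmeas.aestronglyMeasurable, ?_⟩
  rw [hasFiniteIntegral_iff_ofReal (ae_of_all _ fun p => rpow_nonneg (abs_nonneg _) _),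
    lintegral_prod_symm _ hmeas.ennreal_ofReal.aemeasurable]
  refine (lintegral_mono_ae (hη.mono fun x hx => ?_)).trans_lt
    ((hmom.add (integrable_const (t ^ s))).div_const s).lintegral_lt_top
  exact setLIntegral_Ioo_abs_sub_rpow_le hs hx ht

end

theorem stmt_12_general (η : Measure ℝ) [IsProbabilityMeasure η] (hsupp : η (Set.Iio 0) = 0)
    (α : ℝ) (hα : α ∈ Set.Ioo (0:ℝ) 1)
    (hmom : Integrable (fun x => x ^ α) η)
    (t : ℝ) (ht : 0 < t) :
    IntegrableOn (fun y => ∫ x, |y - x| ^ (α - 1) ∂η) (Set.Ioo 0 t) volume := by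
  have hη : ∀ᵐ x ∂η, 0 ≤ x :=
    (measure_eq_zero_iff_ae_notMem.1 hsupp).mono fun x hx => not_lt.1 hx
  exact (integrable_abs_sub_rpow_prod hα.1 ht.le hη hmom).integral_prod_left

theorem stmt_12 (η : Measure ℝ) [IsProbabilityMeasure η] (hsupp : η (Set.Iio 0) = 0)
    (α : ℝ) (hα : α ∈ Set.Ioo (0:ℝ) 1)
    (hmom : Integrable (fun x => x ^ α) η)
    (t : ℝ) (ht : 0 < t)
    (hint : Integrable (fun x => |t - x| ^ (α - 1)) η) :
    IntegrableOn (fun y => ∫ x, |y - x| ^ (α - 1) ∂η) (Set.Ioo 0 t) volume :=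
  stmt_12_general η hsupp α hα hmom t ht
end

section
/- Let η be a probability measure on ℝ₊, α ∈ (0,1), and y > 0 such that η({y}) = 0 and ∫ |y-x|^{α-1} dη(x) < ∞. Then the function G(s) = ∫_{(0,s)} (s-x)^α dη(x) is differentiable at s = y with G'(y) = α·∫_{(0,y)} (y-x)^{α-1} dη(x), provided the distribution function Ψ(t) = η((-∞,t]) is Lipschitz of order 1 at y. -/
open Real MeasureTheory Set Filter Topology

/-!
Split `G(s) = ∫_{(0,y)} (s - x)₊^α dη + ∫_{[y,∞)} (s - x)₊^α dη`.

For `r ≥ 0` the power `r^α` lies between `1` and `r`, so `|a^α - t^α| ≤ t^(α-1) |a - t|`: the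
difference quotients of the first integrand are dominated by `(y - x)^(α-1)`, which is integrable,
and the first term may be differentiated under the integral sign.

The second term vanishes for `s ≤ y` and is at most `|s - y|^α η([y, s))` in general; the
Lipschitz condition gives `η([y, s)) ≤ 2C|s - y|`, so this term is `O(|s - y|^(1+α))` and has
derivative `0` at `y`.
-/

lemma abs_rpow_sub_one_le_abs_sub_one {r α : ℝ} (hr : 0 ≤ r) (hα0 : 0 ≤ α) (hα1 : α ≤ 1) :
    |r ^ α - 1| ≤ |r - 1| := by
  rcases le_total r 1 with h | h
  · have : r ≤ r ^ α := self_le_rpow_of_le_one hr h hα1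
    rw [abs_of_nonpos (by linarith [rpow_le_one hr h hα0]), abs_of_nonpos (by linarith)]
    linarith
  · have : r ^ α ≤ r := rpow_le_self_of_one_le h hα1
    rw [abs_of_nonneg (by linarith [one_le_rpow h hα0]), abs_of_nonneg (by linarith)]
    linarith

lemma abs_rpow_sub_rpow_le {a t α : ℝ} (ha : 0 ≤ a) (ht : 0 < t) (hα0 : 0 ≤ α) (hα1 : α ≤ 1) :
    |a ^ α - t ^ α| ≤ t ^ (α - 1) * |a - t| := by
  have key := abs_rpow_sub_one_le_abs_sub_one (div_nonneg ha ht.le) hα0 hα1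
  have htα : 0 < t ^ α := rpow_pos_of_pos ht α
  rw [div_rpow ha ht.le, div_sub_one htα.ne', div_sub_one ht.ne', abs_div, abs_div,
    abs_of_pos htα, abs_of_pos ht, div_le_div_iff₀ htα ht] at key
  rw [rpow_sub_one ht.ne', div_mul_eq_mul_div, le_div_iff₀ ht]
  linarith

lemma abs_max_rpow_sub_rpow_le {u t α : ℝ} (ht : 0 < t) (hα0 : 0 ≤ α) (hα1 : α ≤ 1) :
    |max u 0 ^ α - t ^ α| ≤ t ^ (α - 1) * |u - t| := by
  refine (abs_rpow_sub_rpow_le (le_max_right u 0) ht hα0 hα1).trans ?_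
  refine mul_le_mul_of_nonneg_left ?_ (rpow_nonneg ht.le _)
  simpa [max_eq_left ht.le] using abs_max_sub_max_le_abs u t 0

lemma continuous_max_sub_rpow {α : ℝ} (hα : 0 ≤ α) (s : ℝ) :
    Continuous fun x : ℝ => max (s - x) 0 ^ α :=
  ((continuous_const.sub continuous_id).max continuous_const).rpow_const fun _ => Or.inr hα

lemma hasDerivAt_zero_of_abs_sub_le_mul {f g : ℝ → ℝ} {y : ℝ} (hg : Tendsto g (𝓝 y) (𝓝 0))
    (hf : ∀ᶠ s in 𝓝 y, |f s - f y| ≤ g s * |s - y|) : HasDerivAt f 0 y := by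
  rw [hasDerivAt_iff_isLittleO]
  simp only [smul_zero, sub_zero]
  have hgs : (fun s => g s * (s - y)) =o[𝓝 y] fun s => s - y := by
    simpa using ((Asymptotics.isLittleO_one_iff ℝ).2 hg).mul_isBigO
      (Asymptotics.isBigO_refl (fun s => s - y) _)
  refine Asymptotics.IsBigO.trans_isLittleO ?_ hgs
  refine Asymptotics.IsBigO.of_bound 1 (hf.mono fun s hs => ?_)
  simp only [norm_eq_abs, one_mul, abs_mul]
  exact hs.trans (mul_le_mul_of_nonneg_right (le_abs_self _) (abs_nonneg _))

theorem hasDerivAt_integral_of_dominated_loc_of_lip' {ι 𝕜 E : Type*} [MeasurableSpace ι]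
    {μ : Measure ι} [RCLike 𝕜] [NormedAddCommGroup E] [NormedSpace ℝ E] [NormedSpace 𝕜 E]
    [CompleteSpace E] {F : 𝕜 → ι → E} {F' : ι → E} {x₀ : 𝕜} {bound : ι → ℝ} {s : Set 𝕜}
    (hs : s ∈ 𝓝 x₀) (hF_meas : ∀ x ∈ s, AEStronglyMeasurable (F x) μ)
    (hF_int : Integrable (F x₀) μ) (hF'_meas : AEStronglyMeasurable F' μ)
    (h_lipsch : ∀ᵐ a ∂μ, ∀ x ∈ s, ‖F x a - F x₀ a‖ ≤ bound a * ‖x - x₀‖)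
    (bound_integrable : Integrable bound μ) (h_diff : ∀ᵐ a ∂μ, HasDerivAt (F · a) (F' a) x₀) :
    HasDerivAt (fun x ↦ ∫ a, F x a ∂μ) (∫ a, F' a ∂μ) x₀ := by
  set L : E →L[𝕜] 𝕜 →L[𝕜] E := ContinuousLinearMap.smulRightL 𝕜 𝕜 E 1
  have hm : AEStronglyMeasurable (L ∘ F') μ := L.continuous.comp_aestronglyMeasurable hF'_meas
  obtain ⟨hLF'_int, key⟩ := hasFDerivAt_integral_of_dominated_loc_of_lip' hs hF_meas hF_int hm
    h_lipsch bound_integrable (h_diff.mono fun _ ha ↦ ha.hasFDerivAt)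
  have hF'_int : Integrable F' μ := by
    rw [← integrable_norm_iff hm] at hLF'_int
    simpa [L, Function.comp_def, integrable_norm_iff hF'_meas] using hLF'_int
  rw [hasDerivAt_iff_hasFDerivAt]
  simpa only [Function.comp_def, ContinuousLinearMap.integral_comp_comm _ hF'_int] using! key

section FiniteMeasure

variable {μ : Measure ℝ} [IsFiniteMeasure μ]

lemma measureReal_Ioc_eq_sub {a b : ℝ} (hab : a ≤ b) :
    μ.real (Ioc a b) = μ.real (Iic b) - μ.real (Iic a) := by
  rw [← Iic_sdiff_Iic, measureReal_sdiff (Iic_subset_Iic.2 hab) measurableSet_Iic]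

lemma measureReal_Ico_le_two_mul {y C δ : ℝ} (hC : 0 ≤ C)
    (hLip : ∀ s, |s - y| < δ → |μ.real (Iic s) - μ.real (Iic y)| ≤ C * |s - y|)
    {s : ℝ} (hs : |s - y| < δ) : μ.real (Ico y s) ≤ 2 * C * |s - y| := by
  rcases le_or_gt s y with hsy | hys
  · simp [Ico_eq_empty_of_le hsy]
    positivity
  -- `[y, s)` may carry an atom at `y`, so compare with an interval having `y` in its interior.
  have hs' : |(2 * y - s) - y| < δ := by rwa [show 2 * y - s - y = -(s - y) by ring, abs_neg]
  have h1 := hLip s hs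
  have h2 := hLip _ hs'
  rw [show 2 * y - s - y = -(s - y) by ring, abs_neg] at h2
  calc μ.real (Ico y s) ≤ μ.real (Ioc (2 * y - s) s) :=
        measureReal_mono fun x hx => ⟨by linarith [hx.1], hx.2.le⟩
    _ = μ.real (Iic s) - μ.real (Iic (2 * y - s)) := measureReal_Ioc_eq_sub (by linarith)
    _ ≤ 2 * C * |s - y| := by linarith [abs_le.1 h1, abs_le.1 h2]

lemma abs_setIntegral_Ici_max_sub_rpow_le {α : ℝ} (hα : 0 < α) (y s : ℝ) :
    |∫ x in Ici y, max (s - x) 0 ^ α ∂μ| ≤ |s - y| ^ α * μ.real (Ico y s) := by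
  have hzero : ∀ x ∈ Ici y \ Ico y s, max (s - x) 0 ^ α = 0 := fun x hx => by
    have : s ≤ x := by by_contra h; exact hx.2 ⟨hx.1, not_le.1 h⟩
    rw [max_eq_right (by linarith), zero_rpow hα.ne']
  rw [setIntegral_eq_of_subset_of_forall_sdiff_eq_zero measurableSet_Ici Ico_subset_Ici_self hzero,
    ← norm_eq_abs]
  refine norm_setIntegral_le_of_norm_le_const (measure_lt_top μ _) fun x ⟨hyx, hxs⟩ => ?_
  rw [norm_of_nonneg (rpow_nonneg (le_max_right _ _) _), abs_of_nonneg (by linarith)]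
  exact rpow_le_rpow (le_max_right _ _) (max_le (by linarith) (by linarith)) hα.le

lemma integrableOn_Ici_max_sub_rpow {α : ℝ} (hα : 0 ≤ α) (a s : ℝ) :
    IntegrableOn (fun x => max (s - x) 0 ^ α) (Ici a) μ := by
  refine Measure.integrableOn_of_bounded (M := max (s - a) 0 ^ α) (measure_ne_top μ _)
    (continuous_max_sub_rpow hα s).aestronglyMeasurable ?_
  filter_upwards [ae_restrict_mem measurableSet_Ici] with x (hx : a ≤ x)
  rw [norm_of_nonneg (rpow_nonneg (le_max_right _ _) _)]
  exact rpow_le_rpow (le_max_right _ _) (max_le_max (by linarith) le_rfl) hα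

lemma hasDerivAt_setIntegral_Ioo_max_sub_rpow {α a y : ℝ} (hα0 : 0 < α) (hα1 : α ≤ 1)
    (hint : IntegrableOn (fun x => (y - x) ^ (α - 1)) (Ioo a y) μ) :
    HasDerivAt (fun s => ∫ x in Ioo a y, max (s - x) 0 ^ α ∂μ)
      (α * ∫ x in Ioo a y, (y - x) ^ (α - 1) ∂μ) y := by
  rw [← integral_const_mul]
  refine hasDerivAt_integral_of_dominated_loc_of_lip' univ_mem
    (fun s _ => (continuous_max_sub_rpow hα0.le s).aestronglyMeasurable)
    ((continuous_max_sub_rpow hα0.le y).integrableOn_Icc.mono_set Ioo_subset_Icc_self)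
    (hint.aestronglyMeasurable.const_mul α) ?_ hint ?_
  · filter_upwards [ae_restrict_mem measurableSet_Ioo] with x hx s _
    have := abs_max_rpow_sub_rpow_le (u := s - x) (sub_pos.2 hx.2) hα0.le hα1
    rwa [norm_eq_abs, norm_eq_abs, max_eq_left (sub_pos.2 hx.2).le,
      ← sub_sub_sub_cancel_right s y x]
  · filter_upwards [ae_restrict_mem measurableSet_Ioo] with x hx
    have hderiv : HasDerivAt (fun s : ℝ => (s - x) ^ α) (α * (y - x) ^ (α - 1)) y := by
      simpa using ((hasDerivAt_id y).sub_const x).rpow_const (p := α)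
        (Or.inl (sub_pos.2 hx.2).ne')
    refine hderiv.congr_of_eventuallyEq ?_
    filter_upwards [eventually_gt_nhds hx.2] with s hs
    rw [max_eq_left (sub_pos.2 hs).le]

lemma hasDerivAt_setIntegral_Ici_max_sub_rpow {α y C ε : ℝ} (hα : 0 < α) (hC : 0 ≤ C) (hε : 0 < ε)
    (hLip : ∀ s, |s - y| < ε → |μ.real (Iic s) - μ.real (Iic y)| ≤ C * |s - y|) :
    HasDerivAt (fun s => ∫ x in Ici y, max (s - x) 0 ^ α ∂μ) 0 y := by
  have hy : ∫ x in Ici y, max (y - x) 0 ^ α ∂μ = 0 := by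
    simpa using abs_setIntegral_Ici_max_sub_rpow_le (μ := μ) hα y y
  refine hasDerivAt_zero_of_abs_sub_le_mul (g := fun s => |s - y| ^ α * (2 * C)) ?_ ?_
  · have : Tendsto (fun s => |s - y|) (𝓝 y) (𝓝 0) := by
      simpa using (continuous_sub_right y).abs.tendsto y
    simpa [zero_rpow hα.ne'] using (this.rpow_const (Or.inr hα.le)).mul_const (2 * C)
  · filter_upwards [Metric.ball_mem_nhds y hε] with s hs
    rw [hy, sub_zero, mul_assoc]
    exact (abs_setIntegral_Ici_max_sub_rpow_le hα y s).trans <| mul_le_mul_of_nonneg_left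
      (measureReal_Ico_le_two_mul hC hLip hs) (rpow_nonneg (abs_nonneg _) _)

lemma setIntegral_Ioo_sub_rpow_eq_add {α y : ℝ} (hα : 0 < α) (hy : 0 < y) (s : ℝ) :
    ∫ x in Ioo 0 s, (s - x) ^ α ∂μ =
      (∫ x in Ioo 0 y, max (s - x) 0 ^ α ∂μ) + ∫ x in Ici y, max (s - x) 0 ^ α ∂μ := by
  have hpos : ∫ x in Ioo 0 s, (s - x) ^ α ∂μ = ∫ x in Ioo 0 s, max (s - x) 0 ^ α ∂μ :=
    setIntegral_congr_fun measurableSet_Ioo fun x hx => by rw [max_eq_left (sub_pos.2 hx.2).le]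
  have hzero : ∀ x ∈ Ioi 0 \ Ioo 0 s, max (s - x) 0 ^ α = 0 := fun x hx => by
    have : s ≤ x := by by_contra h; exact hx.2 ⟨hx.1, not_le.1 h⟩
    rw [max_eq_right (by linarith), zero_rpow hα.ne']
  rw [hpos, ← setIntegral_eq_of_subset_of_forall_sdiff_eq_zero measurableSet_Ioi
    Ioo_subset_Ioi_self hzero, ← Ioo_union_Ici_eq_Ioi hy,
    setIntegral_union (disjoint_left.2 fun x hx hx' => (mem_Ici.1 hx').not_gt hx.2)
      measurableSet_Ici
      ((integrableOn_Ici_max_sub_rpow hα.le 0 s).mono_set fun x hx => le_of_lt hx.1)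
      (integrableOn_Ici_max_sub_rpow hα.le y s)]

end FiniteMeasure

theorem stmt_13_general (η : Measure ℝ) [IsProbabilityMeasure η]
    (α : ℝ) (hα : α ∈ Set.Ioo (0:ℝ) 1) (y : ℝ) (hy : 0 < y)
    (hint : Integrable (fun x => |y - x| ^ (α - 1)) η)
    -- the distribution function is Lipschitz of order 1 at `y`:
    (hLip : ∃ C > (0:ℝ), ∃ ε > (0:ℝ), ∀ s, |s - y| < ε →
      |(η (Set.Iic s)).toReal - (η (Set.Iic y)).toReal| ≤ C * |s - y|) :
    HasDerivAt (fun s => ∫ x in Set.Ioo 0 s, (s - x) ^ α ∂η)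
      (α * ∫ x in Set.Ioo 0 y, (y - x) ^ (α - 1) ∂η) y := by
  obtain ⟨hα0, hα1⟩ := hα
  obtain ⟨C, hC, ε, hε, hLip⟩ := hLip
  have hint' : IntegrableOn (fun x => (y - x) ^ (α - 1)) (Ioo 0 y) η :=
    hint.integrableOn.congr_fun (fun x hx => by simp only [abs_of_pos (sub_pos.2 hx.2)])
      measurableSet_Ioo
  have hA := hasDerivAt_setIntegral_Ioo_max_sub_rpow hα0 hα1.le hint'
  have hB := hasDerivAt_setIntegral_Ici_max_sub_rpow hα0 hC.le hε hLip
  have hG := (hA.add hB).congr_of_eventuallyEq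
    (.of_forall (setIntegral_Ioo_sub_rpow_eq_add hα0 hy))
  rwa [add_zero] at hG

theorem stmt_13 (η : Measure ℝ) [IsProbabilityMeasure η] (hsupp : η (Set.Iio 0) = 0)
    (α : ℝ) (hα : α ∈ Set.Ioo (0:ℝ) 1) (y : ℝ) (hy : 0 < y)
    (hatom : η {y} = 0)
    (hint : Integrable (fun x => |y - x| ^ (α - 1)) η)
    -- the distribution function is Lipschitz of order 1 at `y`:
    (hLip : ∃ C > (0:ℝ), ∃ ε > (0:ℝ), ∀ s, |s - y| < ε →
      |(η (Set.Iic s)).toReal - (η (Set.Iic y)).toReal| ≤ C * |s - y|) :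
    HasDerivAt (fun s => ∫ x in Set.Ioo 0 s, (s - x) ^ α ∂η)
      (α * ∫ x in Set.Ioo 0 y, (y - x) ^ (α - 1) ∂η) y :=
  stmt_13_general η α hα y hy hint hLip
end
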